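/- arXiv:1904.05406 — 2 statements merged into one kernel-verified Lean document; each statement's English description precedes it below -/
import Mathlib

section
/- Every permutation of a finite set can be written as the composition of two cyclic permutations (where a cyclic permutation is one whose non-fixed points form a single cycle, or the identity). -/
/-!
Write `σ = c * r` with `c` a cycle disjoint from `r`, and inductively `r = τ * ρ` with `τ` a cycle
on the support of `r` and `ρ` a cycle (or `1`) supported inside it. For `a` in the support of `c`
and `x` in that of `ρ` (or of `τ` if `ρ = 1`), the transposition `s = swap x a` glues:
`σ = (c * τ * s) * (s * ρ)`, and both factors are cycles, because two cycles whose supports meet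
in exactly one point multiply to a cycle.
-/

open Equiv Finset

namespace Equiv.Perm

variable {α : Type*}

theorem sameCycle_pow_apply_of_forall_sameCycle_apply {h p : Perm α} {x : α}
    (hp : ∀ y, p y ≠ x → h.SameCycle y (p y)) (n : ℕ) : h.SameCycle x ((p ^ n) x) := by
  induction n with
  | zero => exact SameCycle.refl h x
  | succ n ih =>
    rw [pow_succ', mul_apply]
    by_cases hx : p ((p ^ n) x) = x
    · rw [hx]
    · exact ih.trans (hp _ hx)

theorem SameCycle.of_forall_sameCycle_apply [Finite α] {h p : Perm α} {x y : α}
    (hp : ∀ z, p z ≠ x → h.SameCycle z (p z)) (hxy : p.SameCycle x y) : h.SameCycle x y := by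
  obtain ⟨n, rfl⟩ := hxy.exists_nat_pow_eq
  exact sameCycle_pow_apply_of_forall_sameCycle_apply hp n

variable [Fintype α] [DecidableEq α]

theorem IsCycle.mul_of_support_inter_eq_singleton {f g : Perm α} {x : α} (hf : f.IsCycle)
    (hg : g.IsCycle) (hfg : f.support ∩ g.support = {x}) :
    (f * g).IsCycle ∧ (f * g).support = f.support ∪ g.support := by
  have hx : x ∈ f.support ∩ g.support := hfg ▸ mem_singleton_self x
  obtain ⟨hxf, hxg⟩ := mem_inter.1 hx
  have hfix : ∀ z, z ≠ x → f z = z ∨ g z = z := by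
    intro z hz
    by_contra! hne
    exact hz (mem_singleton.1 (hfg ▸ mem_inter.2 ⟨mem_support.2 hne.1, mem_support.2 hne.2⟩))
  have hsame : ∀ y ∈ f.support ∪ g.support, (f * g).SameCycle x y := by
    intro y hy
    rcases mem_union.1 hy with hy | hy
    · -- `f * g` agrees with `f` on the support of `f` except at `x`,
      -- so walk the `f`-cycle backwards from `x`
      refine SameCycle.of_forall_sameCycle_apply (p := f⁻¹) (fun z hz => ?_)
        (sameCycle_inv.2 (hf.sameCycle (mem_support.1 hxf) (mem_support.1 hy)))
      obtain ⟨w, rfl⟩ := f.surjective z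
      simp only [coe_inv, symm_apply_apply] at hz ⊢
      rcases hfix w hz with hfw | hgw
      · rw [hfw]
      · have h := (sameCycle_apply_right (f := f * g)).2 (SameCycle.refl _ w)
        rw [mul_apply, hgw] at h
        exact h.symm
    · refine SameCycle.of_forall_sameCycle_apply (p := g) (fun z hz => ?_)
        (hg.sameCycle (mem_support.1 hxg) (mem_support.1 hy))
      rcases hfix _ hz with hfz | hgz
      · rw [← hfz, ← mul_apply]
        exact sameCycle_apply_right.2 (SameCycle.refl _ _)
      · rw [g.injective hgz]
  have hmove : (f * g) x ≠ x := fun hfix_x =>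
    mem_support.1 hxf ((hsame _ (mem_union_left _ (apply_mem_support.2 hxf))).eq_of_left hfix_x).symm
  refine ⟨⟨x, hmove, fun y hy => hsame y (support_mul_le f g (mem_support.2 hy))⟩, ?_⟩
  refine (support_mul_le f g).antisymm fun y hy => ?_
  exact ((hsame y hy).mem_support_iff).1 (mem_support.2 hmove)

theorem isCycle_mul_mul_swap {c τ : Perm α} {a x : α} (hc : c.IsCycle) (hτ : τ.IsCycle)
    (hcτ : _root_.Disjoint c.support τ.support) (ha : a ∈ c.support) (hx : x ∈ τ.support) :
    (c * (τ * swap x a)).IsCycle ∧ (c * (τ * swap x a)).support = c.support ∪ τ.support := by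
  have hdisj : ∀ y ∈ c.support, y ∉ τ.support := fun _ hy => disjoint_left.1 hcτ hy
  have hxa : x ≠ a := by grind
  obtain ⟨hτs, hτs_supp⟩ := hτ.mul_of_support_inter_eq_singleton (isCycle_swap hxa) (x := x)
    (by ext y; simp only [support_swap hxa, mem_inter, mem_insert, mem_singleton]; grind)
  rw [support_swap hxa] at hτs_supp
  obtain ⟨hcτs, hcτs_supp⟩ := hc.mul_of_support_inter_eq_singleton hτs (x := a)
    (by ext y; simp only [hτs_supp, mem_inter, mem_union, mem_insert, mem_singleton]; grind)
  refine ⟨hcτs, ?_⟩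
  ext y; simp only [hcτs_supp, hτs_supp, mem_union, mem_insert, mem_singleton]; grind

theorem exists_isCycle_mul_of_disjoint {c τ ρ : Perm α} (hc : c.IsCycle) (hτ : τ.IsCycle)
    (hρ : ρ.IsCycle ∨ ρ = 1) (hρτ : ρ.support ⊆ τ.support)
    (hcτ : _root_.Disjoint c.support τ.support) :
    ∃ τ' ρ' : Perm α, τ'.IsCycle ∧ (ρ'.IsCycle ∨ ρ' = 1) ∧ ρ'.support ⊆ τ'.support ∧
      τ'.support = c.support ∪ τ.support ∧ c * (τ * ρ) = τ' * ρ' := by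
  obtain ⟨a, ha⟩ := hc.nonempty_support
  obtain ⟨x, hxτ, hxρ⟩ : ∃ x ∈ τ.support, ρ.IsCycle → x ∈ ρ.support := by
    rcases hρ with hρ | rfl
    · obtain ⟨x, hx⟩ := hρ.nonempty_support
      exact ⟨x, hρτ hx, fun _ => hx⟩
    · obtain ⟨x, hx⟩ := hτ.nonempty_support
      exact ⟨x, hx, fun h => absurd rfl h.ne_one⟩
  have haτ : a ∉ τ.support := disjoint_left.1 hcτ ha
  have hxa : x ≠ a := fun h => haτ (h ▸ hxτ)
  have hswap_supp : (swap x a).support ⊆ c.support ∪ τ.support := by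
    rw [support_swap hxa]
    exact insert_subset (mem_union_right _ hxτ) (singleton_subset_iff.2 (mem_union_left _ ha))
  have hρ' : (swap x a * ρ).IsCycle ∧ (swap x a * ρ).support ⊆ c.support ∪ τ.support := by
    rcases hρ with hρ | rfl
    · obtain ⟨hcyc, hsupp⟩ := (isCycle_swap hxa).mul_of_support_inter_eq_singleton hρ (x := x)
        (by ext y; simp only [support_swap hxa, mem_inter, mem_insert, mem_singleton]; grind)
      exact ⟨hcyc, hsupp ▸ union_subset hswap_supp (hρτ.trans subset_union_right)⟩
    · rw [mul_one]
      exact ⟨isCycle_swap hxa, hswap_supp⟩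
  obtain ⟨hτ', hτ'_supp⟩ := isCycle_mul_mul_swap hc hτ hcτ ha hxτ
  exact ⟨c * (τ * swap x a), swap x a * ρ, hτ', Or.inl hρ'.1, hτ'_supp ▸ hρ'.2, hτ'_supp,
    by simp only [mul_assoc, swap_mul_self_mul]⟩

theorem exists_isCycle_mul_of_ne_one {σ : Perm α} (hσ : σ ≠ 1) :
    ∃ τ ρ : Perm α, τ.IsCycle ∧ (ρ.IsCycle ∨ ρ = 1) ∧ ρ.support ⊆ τ.support ∧
      τ.support = σ.support ∧ σ = τ * ρ := by
  induction σ using cycle_induction_on with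
  | base_one => exact absurd rfl hσ
  | base_cycles c hc => exact ⟨c, 1, hc, Or.inr rfl, by simp, rfl, (mul_one c).symm⟩
  | induction_disjoint c r hcr hc _ ihr =>
    rcases eq_or_ne r 1 with rfl | hr
    · exact ⟨c, 1, hc, Or.inr rfl, by simp, by rw [mul_one], rfl⟩
    obtain ⟨τ, ρ, hτ, hρ, hρτ, hτr, rfl⟩ := ihr hr
    obtain ⟨τ', ρ', hτ', hρ', hρ'τ', hτ'_supp, heq⟩ := exists_isCycle_mul_of_disjoint hc hτ hρ
      hρτ (hτr ▸ disjoint_iff_disjoint_support.1 hcr)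
    exact ⟨τ', ρ', hτ', hρ', hρ'τ', by rw [hτ'_supp, hcr.support_mul, hτr], heq⟩

end Equiv.Perm

/-- Every permutation of a finite set is the composition of two cyclic permutations,
where a cyclic permutation is one whose non-fixed points form a single cycle, or
the identity. -/
theorem stmt_0 {α : Type*} [Finite α] (σ : Equiv.Perm α) :
    ∃ τ₁ τ₂ : Equiv.Perm α,
      (τ₁.IsCycle ∨ τ₁ = 1) ∧ (τ₂.IsCycle ∨ τ₂ = 1) ∧ σ = τ₁ * τ₂ := by
  classical
  have := Fintype.ofFinite α
  rcases eq_or_ne σ 1 with rfl | hσ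
  · exact ⟨1, 1, Or.inr rfl, Or.inr rfl, (mul_one 1).symm⟩
  · obtain ⟨τ, ρ, hτ, hρ, -, -, rfl⟩ := Equiv.Perm.exists_isCycle_mul_of_ne_one hσ
    exact ⟨τ, ρ, Or.inl hτ, hρ, rfl⟩
end

section
/- Every finite directed multigraph admits a path-cycle decomposition: its edges can be partitioned into a collection of directed paths together with edge sets of directed cycles, where the number of paths equals half the sum over vertices of |outdegree − indegree|. -/
/-- The edge set `B` forms a single directed cycle with `m + 1` distinct vertices. -/
def IsDirCycle {V E : Type*} [DecidableEq E] (s t : E → V) (B : Finset E) : Prop :=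
  ∃ (m : ℕ) (v : Fin (m + 1) ↪ V) (g : Fin (m + 1) → E),
    Function.Injective g ∧ Finset.univ.image g = B ∧
    ∀ i, s (g i) = v i ∧ t (g i) = v (i + 1)

/-- The edge set `B` forms a single directed path with `m + 2` distinct vertices
`v 0, ..., v (m+1)` and one edge from `v i` to `v (i+1)` for each `i ≤ m`. -/
def IsDirPath {V E : Type*} [DecidableEq E] (s t : E → V) (B : Finset E) : Prop :=
  ∃ (m : ℕ) (v : Fin (m + 2) ↪ V) (g : Fin (m + 1) → E),
    Function.Injective g ∧ Finset.univ.image g = B ∧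
    ∀ i : Fin (m + 1), s (g i) = v i.castSucc ∧ t (g i) = v i.succ

/-
Strong induction on the edge set. If it contains a directed cycle (a loop is a cycle of length
one), remove it: this changes no vertex's out-degree minus in-degree. Otherwise take a longest
directed path. An edge leaving its last vertex would either extend it or close a cycle, and
reversing all edges gives the same for edges entering its first vertex. Removing the path
therefore lowers `∑ v, |d⁺ v - d⁻ v|` by exactly one at each of its two ends and leaves it
unchanged elsewhere.
-/

section

open Finset

variable {V E : Type*} {s t : E → V}

lemma image_univ_getElem_eq_toFinset {α : Type*} [DecidableEq α] {l : List α} {n : ℕ}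
    (hl : l.length = n) : univ.image (fun i : Fin n => l[i.1]'(hl ▸ i.2)) = l.toFinset := by
  subst hl
  exact Fin.univ_image_get l

lemma IsDirPath.nonempty [DecidableEq E] {B : Finset E} (h : IsDirPath s t B) : B.Nonempty := by
  obtain ⟨m, v, g, -, rfl, -⟩ := h
  exact univ_nonempty.image g

lemma IsDirCycle.nonempty [DecidableEq E] {B : Finset E} (h : IsDirCycle s t B) : B.Nonempty := by
  obtain ⟨m, v, g, -, rfl, -⟩ := h
  exact univ_nonempty.image g

lemma IsDirCycle.swap [DecidableEq E] {B : Finset E} (h : IsDirCycle s t B) : IsDirCycle t s B := by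
  obtain ⟨m, v, g, hg, rfl, hst⟩ := h
  let σ : Fin (m + 1) ≃ Fin (m + 1) := (Equiv.addRight 1).trans (Equiv.neg _)
  refine ⟨m, (Equiv.neg _).toEmbedding.trans v, g ∘ σ, hg.comp σ.injective,
    by rw [← image_image, image_univ_equiv], fun i => ⟨?_, (hst (σ i)).1⟩⟩
  simp [σ, (hst _).2]

lemma IsDirCycle.card_filter_src_eq [DecidableEq V] [DecidableEq E] {B : Finset E}
    (h : IsDirCycle s t B) (w : V) : #(B.filter (s · = w)) = #(B.filter (t · = w)) := by
  obtain ⟨m, v, g, hg, rfl, hst⟩ := h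
  simp only [filter_image, card_image_of_injective _ hg, card_filter, (hst _).1, (hst _).2]
  exact (Equiv.sum_comp (Equiv.addRight 1) fun i => if v i = w then 1 else 0).symm

lemma isDirCycle_of_map [DecidableEq E] {cs : List E} {ws : List V} (hcs : cs ≠ [])
    (hws : ws.Nodup) (hs : cs.map s = ws) (ht : cs.map t = ws.rotate 1) :
    IsDirCycle s t cs.toFinset := by
  obtain ⟨m, hm⟩ := Nat.exists_eq_succ_of_ne_zero (List.length_pos_iff.2 hcs).ne'
  have hwl : ws.length = m + 1 := by rw [← hs, List.length_map, hm]
  refine ⟨m, ⟨fun i => ws[i.1], fun i j hij => Fin.ext (hws.getElem_inj_iff.1 hij)⟩,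
    fun i => cs[i.1], fun i j hij => Fin.ext (((hs ▸ hws).of_map s).getElem_inj_iff.1 hij),
    image_univ_getElem_eq_toFinset hm, fun i => ⟨?_, ?_⟩⟩
  · have := List.getElem_of_eq hs (i := i.1) (by simp; omega)
    rwa [List.getElem_map] at this
  · have := List.getElem_of_eq ht (i := i.1) (by simp; omega)
    rw [List.getElem_map, List.getElem_rotate] at this
    rw [this]
    show _ = ws[(i + 1 : Fin (m + 1)).1]
    simp [Fin.val_add, hwl]

lemma card_filter_toFinset_eq_count [DecidableEq V] [DecidableEq E] {l : List E} (hl : l.Nodup)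
    (f : E → V) (w : V) : #(l.toFinset.filter (f · = w)) = (l.map f).count w := by
  rw [List.count, List.countP_map, List.countP_eq_length_filter,
    ← List.toFinset_card_of_nodup (hl.filter _), List.toFinset_filter]
  simp

lemma List.count_dropLast_add_ite [DecidableEq V] {vs : List V} (hne : vs ≠ []) (w : V) :
    vs.dropLast.count w + (if vs.getLast hne = w then 1 else 0) =
      (if vs.head hne = w then 1 else 0) + vs.tail.count w := by
  rw [← List.count_singleton', ← List.count_append, List.dropLast_append_getLast,
    ← List.count_singleton', ← List.count_append, List.singleton_append, List.cons_head_tail]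

/-- The `i`-th edge of `es` goes from `vs[i]` to `vs[i + 1]`. -/
structure IsWalkOn (s t : E → V) (vs : List V) (es : List E) : Prop where
  map_src : es.map s = vs.dropLast
  map_tgt : es.map t = vs.tail

namespace IsWalkOn

variable {vs : List V} {es : List E}

lemma nil (v : V) : IsWalkOn s t [v] [] := ⟨rfl, rfl⟩

lemma reverse (h : IsWalkOn s t vs es) : IsWalkOn t s vs.reverse es.reverse :=
  ⟨by rw [List.map_reverse, h.map_tgt, List.dropLast_reverse],
    by rw [List.map_reverse, h.map_src, List.tail_reverse]⟩

lemma drop (h : IsWalkOn s t vs es) (n : ℕ) : IsWalkOn s t (vs.drop n) (es.drop n) :=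
  ⟨by rw [List.map_drop, h.map_src, List.dropLast_drop_eq_drop_dropLast],
    by rw [List.map_drop, h.map_tgt, List.tail_drop, List.drop_tail]⟩

lemma concat (h : IsWalkOn s t vs es) {e : E} (hne : vs ≠ []) (he : s e = vs.getLast hne) :
    IsWalkOn s t (vs ++ [t e]) (es ++ [e]) :=
  ⟨by simp [h.map_src, he, List.dropLast_append_getLast],
    by simp [h.map_tgt, List.tail_append_of_ne_nil hne]⟩

lemma edges_nodup (h : IsWalkOn s t vs es) (hvs : vs.Nodup) : es.Nodup :=
  (h.map_tgt ▸ hvs.sublist (List.tail_sublist vs)).of_map t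

lemma isDirPath [DecidableEq E] (h : IsWalkOn s t vs es) (hvs : vs.Nodup)
    (hlen : 2 ≤ vs.length) : IsDirPath s t es.toFinset := by
  obtain ⟨m, hm⟩ := Nat.exists_eq_add_of_le' hlen
  have hel : es.length = m + 1 := by simpa [hm] using congrArg List.length h.map_tgt
  refine ⟨m, ⟨fun i => vs[i.1], fun i j hij => Fin.ext (hvs.getElem_inj_iff.1 hij)⟩,
    fun i => es[i.1], fun i j hij => Fin.ext ((h.edges_nodup hvs).getElem_inj_iff.1 hij),
    image_univ_getElem_eq_toFinset hel, fun i => ⟨?_, ?_⟩⟩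
  · have := List.getElem_of_eq h.map_src (i := i.1) (by simp; omega)
    rwa [List.getElem_map, List.getElem_dropLast] at this
  · have := List.getElem_of_eq h.map_tgt (i := i.1) (by simp; omega)
    rwa [List.getElem_map, List.getElem_tail] at this

lemma isDirCycle_concat [DecidableEq E] (h : IsWalkOn s t vs es) (hvs : vs.Nodup) {e : E}
    (hne : vs ≠ []) (hlast : s e = vs.getLast hne) (hhead : t e = vs.head hne) :
    IsDirCycle s t (es ++ [e]).toFinset := by
  obtain ⟨hs, ht⟩ := h.concat hne hlast
  refine isDirCycle_of_map (by simp) hvs (by simpa using hs) ?_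
  obtain ⟨v, vs, rfl⟩ := List.exists_cons_of_ne_nil hne
  simpa [hhead] using ht

lemma exists_isDirCycle_of_mem [DecidableEq E] (h : IsWalkOn s t vs es) (hvs : vs.Nodup)
    {e : E} (hne : vs ≠ []) (hlast : s e = vs.getLast hne) (hmem : t e ∈ vs) :
    ∃ B ⊆ insert e es.toFinset, IsDirCycle s t B := by
  obtain ⟨l₁, l₂, rfl⟩ := List.append_of_mem hmem
  have hdrop := h.drop l₁.length
  rw [List.drop_left] at hdrop
  refine ⟨_, ?_, hdrop.isDirCycle_concat (List.sublist_append_right l₁ _ |>.nodup hvs)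
    (List.cons_ne_nil _ _) (by simpa using hlast) rfl⟩
  intro x
  simp only [List.mem_toFinset, List.mem_append, List.mem_singleton, mem_insert]
  exact fun hx => hx.elim (fun hx => Or.inr (List.mem_of_mem_drop hx)) Or.inl

lemma card_filter_src_add_ite [DecidableEq V] [DecidableEq E] (h : IsWalkOn s t vs es)
    (hvs : vs.Nodup) (hne : vs ≠ []) (w : V) :
    #(es.toFinset.filter (s · = w)) + (if vs.getLast hne = w then 1 else 0) =
      (if vs.head hne = w then 1 else 0) + #(es.toFinset.filter (t · = w)) := by
  rw [card_filter_toFinset_eq_count (h.edges_nodup hvs),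
    card_filter_toFinset_eq_count (h.edges_nodup hvs), h.map_src, h.map_tgt]
  exact List.count_dropLast_add_ite hne w

end IsWalkOn

structure IsPathIn (s t : E → V) (A : Finset E) (vs : List V) (es : List E) : Prop where
  nodup : vs.Nodup
  isWalkOn : IsWalkOn s t vs es
  mem : ∀ e ∈ es, e ∈ A

namespace IsPathIn

variable {A : Finset E} {vs : List V} {es : List E}

lemma reverse (h : IsPathIn s t A vs es) : IsPathIn t s A vs.reverse es.reverse :=
  ⟨List.nodup_reverse.2 h.nodup, h.isWalkOn.reverse,
    fun e he => h.mem e (List.mem_reverse.1 he)⟩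

lemma src_ne_getLast_of_maximal [DecidableEq E] (h : IsPathIn s t A vs es)
    (hmax : ∀ ws fs, IsPathIn s t A ws fs → ws.length ≤ vs.length)
    (hA : ¬∃ B ⊆ A, IsDirCycle s t B) (hne : vs ≠ []) :
    ∀ e ∈ A, s e ≠ vs.getLast hne := by
  intro e he hlast
  by_cases hmem : t e ∈ vs
  · obtain ⟨B, hB, hcyc⟩ := h.isWalkOn.exists_isDirCycle_of_mem h.nodup hne hlast hmem
    have hesA : es.toFinset ⊆ A := fun x hx => h.mem x (List.mem_toFinset.1 hx)
    exact hA ⟨B, hB.trans (insert_subset he hesA), hcyc⟩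
  · have hlong := hmax _ _ ⟨h.nodup.append (List.nodup_singleton _) (by simpa using hmem),
      h.isWalkOn.concat hne hlast, fun x hx => ?_⟩
    · simp at hlong
    rcases List.mem_append.1 hx with hx | hx
    exacts [h.mem x hx, List.mem_singleton.1 hx ▸ he]

end IsPathIn

lemma exists_maximal_isPathIn [Fintype V] [DecidableEq E] {A : Finset E} (hA : A.Nonempty)
    (hcyc : ¬∃ B ⊆ A, IsDirCycle s t B) :
    ∃ vs es, IsPathIn s t A vs es ∧ 2 ≤ vs.length ∧
      ∀ ws fs, IsPathIn s t A ws fs → ws.length ≤ vs.length := by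
  classical
  obtain ⟨e, he⟩ := hA
  -- a loop at `s e` would be a directed cycle of length one
  have hloop : s e ≠ t e := fun hst => hcyc <| by
    obtain ⟨B, hB, hc⟩ := (IsWalkOn.nil (s := s) (t := t) (s e)).exists_isDirCycle_of_mem
      (List.nodup_singleton _) (List.cons_ne_nil _ _) rfl (by simp [hst])
    exact ⟨B, hB.trans (by simpa using he), hc⟩
  let P : ℕ → Prop := fun n => ∃ vs es, IsPathIn s t A vs es ∧ vs.length = n
  have hbound : ∀ n, P n → n ≤ Fintype.card V := by
    rintro n ⟨vs, es, hp, rfl⟩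
    exact hp.nodup.length_le_card
  have h2 : P 2 :=
    ⟨[s e, t e], [e], ⟨by simpa using hloop, ⟨rfl, rfl⟩, by simpa using he⟩, rfl⟩
  obtain ⟨vs, es, hp, hlen⟩ := Nat.findGreatest_spec (hbound 2 h2) h2
  refine ⟨vs, es, hp, hlen ▸ Nat.le_findGreatest (hbound 2 h2) h2, fun ws fs hq => ?_⟩
  rw [hlen]
  exact Nat.le_findGreatest (hbound _ ⟨ws, fs, hq, rfl⟩) ⟨ws, fs, hq, rfl⟩

lemma exists_isPathIn_of_not_exists_isDirCycle [Fintype V] [DecidableEq E] {A : Finset E}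
    (hA : A.Nonempty) (hcyc : ¬∃ B ⊆ A, IsDirCycle s t B) :
    ∃ vs es, ∃ hne : vs ≠ [], IsPathIn s t A vs es ∧ 2 ≤ vs.length ∧
      (∀ e ∈ A, s e ≠ vs.getLast hne) ∧ (∀ e ∈ A, t e ≠ vs.head hne) := by
  obtain ⟨vs, es, hp, hlen, hmax⟩ := exists_maximal_isPathIn hA hcyc
  have hne : vs ≠ [] := List.ne_nil_of_length_pos (by omega)
  refine ⟨vs, es, hne, hp, hlen, hp.src_ne_getLast_of_maximal hmax hcyc hne, ?_⟩
  -- In the reversed graph the reversed path is still a longest one, and its last vertex is our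
  -- first vertex.
  have hrev := hp.reverse.src_ne_getLast_of_maximal
    (fun ws fs hq => by simpa using hmax _ _ hq.reverse)
    (fun ⟨B, hB, hc⟩ => hcyc ⟨B, hB, hc.swap⟩) (by simpa using hne)
  simpa using hrev

lemma card_filter_sdiff_add {α : Type*} [DecidableEq α] {A B : Finset α} (h : B ⊆ A)
    (p : α → Prop) [DecidablePred p] : #((A \ B).filter p) + #(B.filter p) = #(A.filter p) := by
  rw [← card_union_of_disjoint (disjoint_filter_filter sdiff_disjoint), ← filter_union,
    sdiff_union_of_subset h]

def imbalance [Fintype V] [DecidableEq V] (s t : E → V) (A : Finset E) : ℕ :=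
  ∑ v, Nat.dist #(A.filter fun e => s e = v) #(A.filter fun e => t e = v)

lemma imbalance_sdiff_of_isDirCycle [Fintype V] [DecidableEq V] [DecidableEq E] {A B : Finset E}
    (hBA : B ⊆ A) (hB : IsDirCycle s t B) : imbalance s t (A \ B) = imbalance s t A := by
  refine sum_congr rfl fun w _ => ?_
  rw [← card_filter_sdiff_add hBA, ← card_filter_sdiff_add hBA, hB.card_filter_src_eq,
    Nat.dist_add_add_right]

lemma IsPathIn.imbalance_sdiff_add_two [Fintype V] [DecidableEq V] [DecidableEq E]
    {A : Finset E} {vs : List V} {es : List E} (h : IsPathIn s t A vs es) (hne : vs ≠ [])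
    (hlen : 2 ≤ vs.length) (hout : ∀ e ∈ A, s e ≠ vs.getLast hne)
    (hin : ∀ e ∈ A, t e ≠ vs.head hne) :
    imbalance s t (A \ es.toFinset) + 2 = imbalance s t A := by
  have hBA : es.toFinset ⊆ A := fun e he => h.mem e (List.mem_toFinset.1 he)
  have hab : vs.head hne ≠ vs.getLast hne := by
    rw [List.head_eq_getElem, List.getLast_eq_getElem, Ne, h.nodup.getElem_inj_iff]
    omega
  have hvertex : ∀ w, Nat.dist #(A.filter (s · = w)) #(A.filter (t · = w)) =
      Nat.dist #((A \ es.toFinset).filter (s · = w)) #((A \ es.toFinset).filter (t · = w)) +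
        ((if vs.head hne = w then 1 else 0) + (if vs.getLast hne = w then 1 else 0)) := by
    intro w
    have hs := card_filter_sdiff_add hBA (s · = w)
    have ht := card_filter_sdiff_add hBA (t · = w)
    have hw := h.isWalkOn.card_filter_src_add_ite h.nodup hne w
    have hs0 : vs.getLast hne = w → #(A.filter (s · = w)) = 0 := by
      rintro rfl
      simpa [filter_eq_empty_iff] using hout
    have ht0 : vs.head hne = w → #(A.filter (t · = w)) = 0 := by
      rintro rfl
      simpa [filter_eq_empty_iff] using hin
    unfold Nat.dist
    split_ifs at hw ⊢ with ha hb hb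
    · exact absurd (ha.trans hb.symm) hab
    · have := ht0 ha
      omega
    · have := hs0 hb
      omega
    · omega
  simp only [imbalance, hvertex, sum_add_distrib, sum_ite_eq, mem_univ, if_true]

section Cover

variable {α : Type*} [DecidableEq α] {F : Finset (Finset α)} {A B : Finset α}

lemma biUnion_insert_of_biUnion_eq_sdiff (hF : F.biUnion id = A \ B) (hBA : B ⊆ A) :
    (insert B F).biUnion id = A := by
  rw [biUnion_insert, hF, id, union_sdiff_of_subset hBA]

lemma pairwiseDisjoint_insert_of_biUnion_eq_sdiff (hF : F.biUnion id = A \ B)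
    (hd : (F : Set (Finset α)).PairwiseDisjoint id) :
    ((insert B F : Finset (Finset α)) : Set (Finset α)).PairwiseDisjoint id := by
  rw [coe_insert]
  refine hd.insert fun C hC _ => ?_
  have hCA : C ⊆ A \ B := hF ▸ subset_biUnion_of_mem id hC
  exact disjoint_sdiff.mono_right hCA

lemma notMem_of_biUnion_eq_sdiff (hF : F.biUnion id = A \ B) (hB : B.Nonempty) : B ∉ F := by
  intro hBF
  obtain ⟨x, hx⟩ := hB
  have := hF ▸ subset_biUnion_of_mem id hBF hx
  exact (mem_sdiff.1 this).2 hx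

end Cover

structure IsPathCycleDecomposition [DecidableEq E] (s t : E → V) (A : Finset E)
    (PS CS : Finset (Finset E)) : Prop where
  isDirPath : ∀ B ∈ PS, IsDirPath s t B
  isDirCycle : ∀ B ∈ CS, IsDirCycle s t B
  biUnion_eq : (PS ∪ CS).biUnion id = A
  pairwiseDisjoint : ((PS ∪ CS : Finset (Finset E)) : Set (Finset E)).PairwiseDisjoint id

namespace IsPathCycleDecomposition

variable [DecidableEq E] {A B : Finset E} {PS CS : Finset (Finset E)}

lemma insert_path (h : IsPathCycleDecomposition s t (A \ B) PS CS) (hBA : B ⊆ A)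
    (hB : IsDirPath s t B) : IsPathCycleDecomposition s t A (insert B PS) CS := by
  refine ⟨(forall_mem_insert _ _ _).2 ⟨hB, h.isDirPath⟩, h.isDirCycle, ?_, ?_⟩ <;>
    rw [insert_union]
  exacts [biUnion_insert_of_biUnion_eq_sdiff h.biUnion_eq hBA,
    pairwiseDisjoint_insert_of_biUnion_eq_sdiff h.biUnion_eq h.pairwiseDisjoint]

lemma insert_cycle (h : IsPathCycleDecomposition s t (A \ B) PS CS) (hBA : B ⊆ A)
    (hB : IsDirCycle s t B) : IsPathCycleDecomposition s t A PS (insert B CS) := by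
  refine ⟨h.isDirPath, (forall_mem_insert _ _ _).2 ⟨hB, h.isDirCycle⟩, ?_, ?_⟩ <;>
    rw [union_insert]
  exacts [biUnion_insert_of_biUnion_eq_sdiff h.biUnion_eq hBA,
    pairwiseDisjoint_insert_of_biUnion_eq_sdiff h.biUnion_eq h.pairwiseDisjoint]

lemma notMem_left (h : IsPathCycleDecomposition s t (A \ B) PS CS) (hB : B.Nonempty) :
    B ∉ PS :=
  fun hBP => notMem_of_biUnion_eq_sdiff h.biUnion_eq hB (mem_union_left CS hBP)

end IsPathCycleDecomposition

theorem exists_isPathCycleDecomposition [Fintype V] [DecidableEq V] [DecidableEq E]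
    (s t : E → V) (A : Finset E) :
    ∃ PS CS, IsPathCycleDecomposition s t A PS CS ∧ 2 * #PS = imbalance s t A := by
  induction A using Finset.strongInduction with
  | H A ih =>
  obtain rfl | hA := A.eq_empty_or_nonempty
  · exact ⟨∅, ∅, ⟨by simp, by simp, by simp, by simp⟩, by simp [imbalance]⟩
  by_cases hcyc : ∃ B ⊆ A, IsDirCycle s t B
  · obtain ⟨B, hBA, hB⟩ := hcyc
    obtain ⟨PS, CS, hdec, hcard⟩ := ih (A \ B) (sdiff_ssubset hBA hB.nonempty)
    exact ⟨PS, insert B CS, hdec.insert_cycle hBA hB,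
      hcard.trans (imbalance_sdiff_of_isDirCycle hBA hB)⟩
  · obtain ⟨vs, es, hne, hp, hlen, hout, hin⟩ :=
      exists_isPathIn_of_not_exists_isDirCycle hA hcyc
    have hBA : es.toFinset ⊆ A := fun e he => hp.mem e (List.mem_toFinset.1 he)
    have hB := hp.isWalkOn.isDirPath hp.nodup hlen
    obtain ⟨PS, CS, hdec, hcard⟩ := ih (A \ es.toFinset) (sdiff_ssubset hBA hB.nonempty)
    refine ⟨insert es.toFinset PS, CS, hdec.insert_path hBA hB, ?_⟩
    rw [card_insert_of_notMem (hdec.notMem_left hB.nonempty), mul_add, hcard,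
      ← hp.imbalance_sdiff_add_two hne hlen hout hin]

end

theorem stmt_6_general {V E : Type*} [Fintype V] [Fintype E] [DecidableEq V] [DecidableEq E]
    (s t : E → V) :
    ∃ PS CS : Finset (Finset E),
      (∀ B ∈ PS, IsDirPath s t B) ∧
      (∀ B ∈ CS, IsDirCycle s t B) ∧
      (PS ∪ CS).biUnion id = Finset.univ ∧
      (∀ B ∈ PS ∪ CS, ∀ B' ∈ PS ∪ CS, B ≠ B' → Disjoint B B') ∧
      2 * PS.card = ∑ v : V, Nat.dist
        (Finset.univ.filter fun e => s e = v).card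
        (Finset.univ.filter fun e => t e = v).card := by
  obtain ⟨PS, CS, h, hcard⟩ := exists_isPathCycleDecomposition s t Finset.univ
  exact ⟨PS, CS, h.isDirPath, h.isDirCycle, h.biUnion_eq,
    fun B hB B' hB' => h.pairwiseDisjoint hB hB', hcard⟩

/-- Every finite directed multigraph (no loops) admits a path-cycle decomposition:
the edges partition into edge-disjoint directed paths and directed cycles, where the
number of paths is half the sum over vertices of `|outdegree − indegree|`. -/
theorem stmt_6 {V E : Type*} [Fintype V] [Fintype E] [DecidableEq V] [DecidableEq E]
    (s t : E → V) (hloop : ∀ e, s e ≠ t e) :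
    ∃ PS CS : Finset (Finset E),
      (∀ B ∈ PS, IsDirPath s t B) ∧
      (∀ B ∈ CS, IsDirCycle s t B) ∧
      (PS ∪ CS).biUnion id = Finset.univ ∧
      (∀ B ∈ PS ∪ CS, ∀ B' ∈ PS ∪ CS, B ≠ B' → Disjoint B B') ∧
      2 * PS.card = ∑ v : V, Nat.dist
        (Finset.univ.filter fun e => s e = v).card
        (Finset.univ.filter fun e => t e = v).card :=
  stmt_6_general s t
end
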